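/- Let U be a vector space with a single left symmetric product ·. Define on T(U) = U × U the product (X,Y)·(Z,T) = (X·Z + Y·Z, Y·T + X·T). Then this product on T(U) is left symmetric. -/

import Mathlib

/-!
Since `·` is bilinear, `(X,Y)·(Z,T) = ((X+Y)·Z, (X+Y)·T)`: the product on `T(U)` acts by left
multiplication by `s(X,Y) = X + Y` in each coordinate, and `s` is multiplicative. Hence each
coordinate of the associator of `T(U)` at `(p, q, r)` is the associator of `U` at
`(s p, s q, rᵢ)`, which is symmetric in its first two arguments.
-/

variable {k U : Type*} [Field k] [AddCommGroup U] [Module k U]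

/-- The product `(X,Y)·(Z,T) = (X·Z + Y·Z, Y·T + X·T)` on `T(U) = U × U`. -/
def tProd (mul : U →ₗ[k] U →ₗ[k] U) (p q : U × U) : U × U :=
  (mul p.1 q.1 + mul p.2 q.1, mul p.2 q.2 + mul p.1 q.2)

def mulAssociator {R M : Type*} [CommSemiring R] [AddCommGroup M] [Module R M]
    (mul : M →ₗ[R] M →ₗ[R] M) (a b c : M) : M :=
  mul (mul a b) c - mul a (mul b c)

section

variable (mul : U →ₗ[k] U →ₗ[k] U) (p q r : U × U)

theorem tProd_eq : tProd mul p q = (mul (p.1 + p.2) q.1, mul (p.1 + p.2) q.2) := by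
  simp only [tProd, map_add, LinearMap.add_apply, add_comm (mul p.2 q.2)]

theorem fst_add_snd_tProd :
    (tProd mul p q).1 + (tProd mul p q).2 = mul (p.1 + p.2) (q.1 + q.2) := by
  rw [tProd_eq]
  exact (map_add (mul (p.1 + p.2)) q.1 q.2).symm

theorem tProd_mulAssociator :
    tProd mul (tProd mul p q) r - tProd mul p (tProd mul q r)
      = (mulAssociator mul (p.1 + p.2) (q.1 + q.2) r.1,
          mulAssociator mul (p.1 + p.2) (q.1 + q.2) r.2) := by
  rw [tProd_eq mul (tProd mul p q), fst_add_snd_tProd, tProd_eq mul q, tProd_eq mul p]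
  rfl

end

/-- If `(U,·)` is left symmetric, then the product on `T(U) = U × U` is left symmetric. -/
theorem tProd_leftSymmetric (mul : U →ₗ[k] U →ₗ[k] U)
    (hls : ∀ u v w : U,
      mul (mul u v) w - mul u (mul v w) = mul (mul v u) w - mul v (mul u w))
    (p q r : U × U) :
    tProd mul (tProd mul p q) r - tProd mul p (tProd mul q r)
      = tProd mul (tProd mul q p) r - tProd mul q (tProd mul p r) := by
  rw [tProd_mulAssociator, tProd_mulAssociator, add_comm q.1, add_comm p.1]
  exact Prod.ext (hls _ _ _) (hls _ _ _)
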